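/- Let Θ be a d×d integer matrix each of whose columns is a 0-1 vector with exactly one or exactly two entries equal to 1. Then the polynomial q̃_Θ belongs to the ideal I if and only if det Θ is odd. -/

import Mathlib

open MvPolynomial Matrix

/-!
Write a sign vector as `ε = 1 - 2x` with `x ∈ {0,1}^d`, read as a vector over `𝔽₂`; then
`ε = (1,…,1)` exactly when `x = 0`. Since every column of `Θ` has column sum `1` or `2`, the factor
of `q̃_Θ` belonging to column `c` evaluates at `ε` to `1 - n_c`, where `n_c = ∑ᵢ Θᵢ꜀ xᵢ ∈ {0,1,2}`.
So `q̃_Θ(ε) = 0` iff some `n_c` is odd, i.e. iff `xᵀΘ ≠ 0` over `𝔽₂`. Hence `q̃_Θ` vanishes on `Z'`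
iff `Θ mod 2` has trivial left kernel, i.e. iff `det Θ` is odd.
-/

/-- For a `d×d` integer matrix `Θ` each of whose columns is a 0-1 vector with exactly one
or two entries equal to 1, the modified polynomial `q̃_Θ(z) = ∏_{columns θ} r̃_θ(z)`, where
`r̃_θ(z) = (1+z_k)/2` if `θ = e_k` and `r̃_θ(z) = (z_j+z_k)/2` if `θ = e_j + e_k`, `j ≠ k`.
(For a single one the column sum is 1 and `∑ θ_i z_i = z_k`; for two ones it is `z_j + z_k`.) -/
noncomputable def qtilde {d : ℕ} (Θ : Matrix (Fin d) (Fin d) ℤ) : MvPolynomial (Fin d) ℝ :=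
  ∏ c : Fin d,
    (C (1 / 2 : ℝ) *
      ((if (∑ i, Θ i c) = 1 then 1 else 0) + ∑ i : Fin d, C ((Θ i c : ℝ)) * X i))

lemma eval_qtilde {d : ℕ} {Θ : Matrix (Fin d) (Fin d) ℤ}
    (h12 : ∀ c, (∑ i, Θ i c) = 1 ∨ (∑ i, Θ i c) = 2) (ε : Fin d → ℝ) :
    eval ε (qtilde Θ) = ∏ c, (1 - ∑ i, (Θ i c : ℝ) * ((1 - ε i) / 2)) := by
  simp only [qtilde, map_prod, map_mul, map_add, map_sum, eval_C, eval_X, apply_ite (eval ε),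
    map_one, map_zero]
  refine Finset.prod_congr rfl fun c _ => ?_
  have hcol : (if ∑ i, Θ i c = 1 then (1 : ℝ) else 0) + ∑ i, (Θ i c : ℝ) = 2 := by
    rw [← Int.cast_sum]
    rcases h12 c with h | h <;> norm_num [h]
  have hsplit : ∑ i, (Θ i c : ℝ) * ((1 - ε i) / 2)
      = ((∑ i, (Θ i c : ℝ)) - ∑ i, (Θ i c : ℝ) * ε i) / 2 := by
    rw [← Finset.sum_sub_distrib, Finset.sum_div]
    exact Finset.sum_congr rfl fun i _ => by ring
  rw [hsplit]
  linarith

section SignVector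

variable {ι : Type*}

noncomputable def signVector (x : ι → ZMod 2) : ι → ℝ := fun i => 1 - 2 * ((x i).val : ℝ)

lemma ZMod.val_eq_zero_or_eq_one (a : ZMod 2) : a.val = 0 ∨ a.val = 1 := by
  have := ZMod.val_lt a
  omega

@[simp]
lemma one_sub_signVector_div_two (x : ι → ZMod 2) (i : ι) :
    (1 - signVector x i) / 2 = (x i).val := by
  simp only [signVector]
  ring

lemma signVector_eq_one_iff (x : ι → ZMod 2) : signVector x = (fun _ => 1) ↔ x = 0 := by
  simp only [funext_iff, signVector, Pi.zero_apply, ← ZMod.val_eq_zero]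
  refine forall_congr' fun i => ?_
  constructor <;> intro h
  · exact_mod_cast (by linarith : ((x i).val : ℝ) = 0)
  · simp [h]

lemma forall_pm_one_iff_forall_signVector {P : (ι → ℝ) → Prop} :
    (∀ ε : ι → ℝ, (∀ i, ε i = -1 ∨ ε i = 1) → P ε) ↔ ∀ x, P (signVector x) := by
  classical
  refine ⟨fun h x => h _ fun i => ?_, fun h ε hε => ?_⟩
  · rcases ZMod.val_eq_zero_or_eq_one (x i) with hx | hx <;> norm_num [signVector, hx]
  · convert h fun i => if ε i = 1 then 0 else 1 using 1
    funext i
    rcases hε i with h | h <;> norm_num [signVector, h, ZMod.val_one]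

end SignVector

lemma Int.eq_one_iff_odd_of_nonneg_of_le_two {n : ℤ} (h0 : 0 ≤ n) (h2 : n ≤ 2) :
    n = 1 ↔ Odd n := by
  interval_cases n <;> decide

section ColumnParity

variable {ι κ : Type*} [Fintype ι]

lemma intCast_sum_mul_val_eq_vecMul (Θ : Matrix ι κ ℤ) (x : ι → ZMod 2) (c : κ) :
    ((∑ i, Θ i c * ((x i).val : ℤ) : ℤ) : ZMod 2) = (x ᵥ* Θ.map (Int.cast : ℤ → ZMod 2)) c := by
  simp only [Int.cast_sum, Int.cast_mul, Int.cast_natCast, ZMod.natCast_zmod_val, vecMul, dotProduct,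
    map_apply]
  exact Finset.sum_congr rfl fun i _ => mul_comm _ _

lemma sum_mul_val_mem_Icc {Θ : Matrix ι κ ℤ} (hΘ : ∀ i c, 0 ≤ Θ i c)
    (hcol : ∀ c, ∑ i, Θ i c ≤ 2) (x : ι → ZMod 2) (c : κ) :
    0 ≤ ∑ i, Θ i c * ((x i).val : ℤ) ∧ ∑ i, Θ i c * ((x i).val : ℤ) ≤ 2 := by
  have hval (i : ι) : (0 : ℤ) ≤ (x i).val ∧ ((x i).val : ℤ) ≤ 1 := by
    rcases ZMod.val_eq_zero_or_eq_one (x i) with h | h <;> simp [h]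
  refine ⟨Finset.sum_nonneg fun i _ => mul_nonneg (hΘ i c) (hval i).1, ?_⟩
  calc ∑ i, Θ i c * ((x i).val : ℤ) ≤ ∑ i, Θ i c :=
        Finset.sum_le_sum fun i _ => mul_le_of_le_one_right (hΘ i c) (hval i).2
    _ ≤ 2 := hcol c

lemma sum_mul_val_eq_one_iff {Θ : Matrix ι κ ℤ} (hΘ : ∀ i c, 0 ≤ Θ i c)
    (hcol : ∀ c, ∑ i, Θ i c ≤ 2) (x : ι → ZMod 2) (c : κ) :
    ∑ i, Θ i c * ((x i).val : ℤ) = 1 ↔ (x ᵥ* Θ.map (Int.cast : ℤ → ZMod 2)) c ≠ 0 := by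
  obtain ⟨h0, h2⟩ := sum_mul_val_mem_Icc hΘ hcol x c
  rw [Int.eq_one_iff_odd_of_nonneg_of_le_two h0 h2, ← intCast_sum_mul_val_eq_vecMul, Ne,
    ZMod.intCast_eq_zero_iff_even, Int.not_even_iff_odd]

end ColumnParity

lemma eval_signVector_qtilde_eq_zero_iff {d : ℕ} {Θ : Matrix (Fin d) (Fin d) ℤ}
    (h01 : ∀ i c, Θ i c = 0 ∨ Θ i c = 1)
    (h12 : ∀ c, (∑ i, Θ i c) = 1 ∨ (∑ i, Θ i c) = 2) (x : Fin d → ZMod 2) :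
    eval (signVector x) (qtilde Θ) = 0 ↔ x ᵥ* Θ.map (Int.cast : ℤ → ZMod 2) ≠ 0 := by
  have hΘ (i c : Fin d) : 0 ≤ Θ i c := by rcases h01 i c with h | h <;> simp [h]
  have hcol (c : Fin d) : ∑ i, Θ i c ≤ 2 := by rcases h12 c with h | h <;> simp [h]
  rw [eval_qtilde h12, Finset.prod_eq_zero_iff, Ne, funext_iff, not_forall]
  simp only [Finset.mem_univ, true_and, Pi.zero_apply, one_sub_signVector_div_two]
  refine exists_congr fun c => ?_
  rw [← Ne, ← sum_mul_val_eq_one_iff hΘ hcol, sub_eq_zero, eq_comm]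
  exact_mod_cast Iff.rfl

theorem stmt_5_general (d : ℕ) (Θ : Matrix (Fin d) (Fin d) ℤ)
    (h01 : ∀ i c, Θ i c = 0 ∨ Θ i c = 1)
    (h12 : ∀ c, (∑ i, Θ i c) = 1 ∨ (∑ i, Θ i c) = 2) :
    (∀ ε : Fin d → ℝ, (∀ i, ε i = -1 ∨ ε i = 1) → ε ≠ (fun _ => 1) →
      eval ε (qtilde Θ) = 0) ↔ Odd Θ.det := by
  set M := Θ.map (Int.cast : ℤ → ZMod 2)
  calc (∀ ε : Fin d → ℝ, (∀ i, ε i = -1 ∨ ε i = 1) → ε ≠ (fun _ => 1) →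
        eval ε (qtilde Θ) = 0)
      ↔ ∀ x : Fin d → ZMod 2, x ≠ 0 → x ᵥ* M ≠ 0 := by
        simp only [forall_pm_one_iff_forall_signVector, Ne, signVector_eq_one_iff,
          eval_signVector_qtilde_eq_zero_iff h01 h12, M]
    _ ↔ M.det ≠ 0 := by
        rw [Ne, ← exists_vecMul_eq_zero_iff]
        push Not
        rfl
    _ ↔ Odd Θ.det := by
        rw [← Int.cast_det, Ne, ZMod.intCast_eq_zero_iff_even, Int.not_even_iff_odd]

/-- If each column of `Θ` is a 0-1 vector with exactly one or two ones, then `q̃_Θ`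
vanishes on `Z' = {ε ∈ {−1,1}^d : ε ≠ (1,…,1)}` if and only if `det Θ` is odd. -/
theorem stmt_5 (d : ℕ) (hd : 1 ≤ d) (Θ : Matrix (Fin d) (Fin d) ℤ)
    (h01 : ∀ i c, Θ i c = 0 ∨ Θ i c = 1)
    (h12 : ∀ c, (∑ i, Θ i c) = 1 ∨ (∑ i, Θ i c) = 2) :
    (∀ ε : Fin d → ℝ, (∀ i, ε i = -1 ∨ ε i = 1) → ε ≠ (fun _ => 1) →
      eval ε (qtilde Θ) = 0) ↔ Odd Θ.det :=
  stmt_5_general d Θ h01 h12
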